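/- Let (X, <, R) be a countable homogeneous ordered bipartite graph whose underlying coloured order is the generic 2-coloured linear order ℚ₂ (a countable dense linear order without endpoints in which both red and blue points are dense). Write R₁ = {(a,b) ∈ R : a red, b blue, a < b} and R₂ = {(a,b) ∈ R : a red, b blue, b < a}. Then R₁ is empty, or right complete (equal to {(a,b) : a red, b blue, a < b}), or right generic (for any finite disjoint sets A₁, A₂ of red points the set of blue points joined to all of A₁ and none of A₂ is dense in (max(A₁ ∪ A₂), ∞), and for any finite disjoint sets B₁, B₂ of blue points the set of red points joined to all of B₁ and none of B₂ is dense in (−∞, min(B₁ ∪ B₂))); and symmetrically R₂ is empty, left complete, or left generic; and R = R₁ ∪ R₂. -/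
import Mathlib


/-- A map `f` defined on the finite set `s` is a partial isomorphism of the structure
`(X, lt, red, R)`: it preserves the order `lt`, the colours `red`, and the graph
relation `R` together with its negation. -/
def IsPartialIso {X : Type*} (lt : X → X → Prop) (red : X → Bool) (R : X → X → Prop)
    (s : Finset X) (f : X → X) : Prop :=
  (∀ x ∈ s, ∀ y ∈ s, (lt x y ↔ lt (f x) (f y))) ∧
  (∀ x ∈ s, red (f x) = red x) ∧
  (∀ x ∈ s, ∀ y ∈ s, (R x y ↔ R (f x) (f y)))

/-- `g` is an automorphism of the structure `(X, lt, red, R)`. -/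
def IsAuto {X : Type*} (lt : X → X → Prop) (red : X → Bool) (R : X → X → Prop)
    (g : X ≃ X) : Prop :=
  (∀ x y, lt x y ↔ lt (g x) (g y)) ∧ (∀ x, red (g x) = red x) ∧
  (∀ x y, R x y ↔ R (g x) (g y))

/-- The structure `(X, lt, red, R)` is homogeneous: every isomorphism between finite
substructures extends to an automorphism. -/
def Homogeneous {X : Type*} (lt : X → X → Prop) (red : X → Bool) (R : X → X → Prop) : Prop :=
  ∀ (s : Finset X) (f : X → X), IsPartialIso lt red R s f →
    ∃ g : X ≃ X, IsAuto lt red R g ∧ ∀ x ∈ s, g x = f x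

/-- The right generic witness property for `R₁ = {(a,b) ∈ R : a red, b blue, a < b}`. -/
def RightGeneric {X : Type*} [LinearOrder X] [DecidableEq X]
    (red : X → Bool) (R : X → X → Prop) : Prop :=
  (∀ A₁ A₂ : Finset X, (∀ a ∈ A₁, red a = true) → (∀ a ∈ A₂, red a = true) →
    Disjoint A₁ A₂ → ∀ hne : (A₁ ∪ A₂).Nonempty,
    ∀ x y : X, (A₁ ∪ A₂).max' hne ≤ x → x < y →
      ∃ c, red c = false ∧ x < c ∧ c < y ∧
        (∀ a ∈ A₁, R a c) ∧ (∀ a ∈ A₂, ¬ R a c)) ∧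
  (∀ B₁ B₂ : Finset X, (∀ b ∈ B₁, red b = false) → (∀ b ∈ B₂, red b = false) →
    Disjoint B₁ B₂ → ∀ hne : (B₁ ∪ B₂).Nonempty,
    ∀ x y : X, x < y → y ≤ (B₁ ∪ B₂).min' hne →
      ∃ c, red c = true ∧ x < c ∧ c < y ∧
        (∀ b ∈ B₁, R c b) ∧ (∀ b ∈ B₂, ¬ R c b))

/-- The left generic witness property for `R₂ = {(a,b) ∈ R : a red, b blue, b < a}`. -/
def LeftGeneric {X : Type*} [LinearOrder X] [DecidableEq X]
    (red : X → Bool) (R : X → X → Prop) : Prop :=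
  (∀ A₁ A₂ : Finset X, (∀ a ∈ A₁, red a = true) → (∀ a ∈ A₂, red a = true) →
    Disjoint A₁ A₂ → ∀ hne : (A₁ ∪ A₂).Nonempty,
    ∀ x y : X, x < y → y ≤ (A₁ ∪ A₂).min' hne →
      ∃ c, red c = false ∧ x < c ∧ c < y ∧
        (∀ a ∈ A₁, R a c) ∧ (∀ a ∈ A₂, ¬ R a c)) ∧
  (∀ B₁ B₂ : Finset X, (∀ b ∈ B₁, red b = false) → (∀ b ∈ B₂, red b = false) →
    Disjoint B₁ B₂ → ∀ hne : (B₁ ∪ B₂).Nonempty,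
    ∀ x y : X, (B₁ ∪ B₂).max' hne ≤ x → x < y →
      ∃ c, red c = true ∧ x < c ∧ c < y ∧
        (∀ b ∈ B₁, R c b) ∧ (∀ b ∈ B₂, ¬ R c b))

section Core

variable {X : Type*} [DecidableEq X]

/-- Hypothesis pack for the abstract density argument. -/
structure Ctx (lt : X → X → Prop) (red : X → Bool) (R : X → X → Prop) : Prop where
  htrans : ∀ a b c, lt a b → lt b c → lt a c
  hirr : ∀ a, ¬ lt a a
  htri : ∀ a b, lt a b ∨ a = b ∨ lt b a
  hsymm : ∀ a b, R a b → R b a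
  hbip : ∀ a b, R a b → red a ≠ red b
  hhom : Homogeneous lt red R
  hdense : ∀ x y, lt x y →
    (∃ z, lt x z ∧ lt z y ∧ red z = true) ∧ (∃ z, lt x z ∧ lt z y ∧ red z = false)
  hnomax : ∀ x, ∃ y, lt x y
  hnomin : ∀ x, ∃ y, lt y x
  hE : ∃ a b, red a = true ∧ red b = false ∧ lt a b ∧ R a b
  hNE : ∃ a b, red a = true ∧ red b = false ∧ lt a b ∧ ¬ R a b

variable {lt : X → X → Prop} {red : X → Bool} {R : X → X → Prop}

lemma bool_not_inj : ∀ {a b : Bool}, (!a) = (!b) → a = b := by decide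

lemma homog_flip (h : Homogeneous lt red R) : Homogeneous (fun a b => lt b a) red R := by
  intro s f hf
  obtain ⟨h1, h2, h3⟩ := hf
  obtain ⟨g, ⟨g1, g2, g3⟩, hgs⟩ := h s f ⟨fun x hx y hy => h1 y hy x hx, h2, h3⟩
  exact ⟨g, ⟨fun x y => g1 y x, g2, g3⟩, hgs⟩

lemma homog_not (h : Homogeneous lt red R) : Homogeneous lt (fun z => !red z) R := by
  intro s f hf
  obtain ⟨h1, h2, h3⟩ := hf
  obtain ⟨g, ⟨g1, g2, g3⟩, hgs⟩ := h s f ⟨h1, fun x hx => bool_not_inj (h2 x hx), h3⟩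
  exact ⟨g, ⟨g1, fun x => congrArg (fun b => !b) (g2 x), g3⟩, hgs⟩

lemma finset_min (lt : X → X → Prop) (htrans : ∀ a b c, lt a b → lt b c → lt a c)
    (htri : ∀ a b, lt a b ∨ a = b ∨ lt b a) (A : Finset X) :
    A.Nonempty → ∃ m ∈ A, ∀ a ∈ A, lt m a ∨ m = a := by
  classical
  induction A using Finset.induction_on with
  | empty => rintro ⟨x, hx⟩; simp at hx
  | @insert b s hb ih =>
    intro _
    by_cases hs : s.Nonempty
    · obtain ⟨m, hm, hmin⟩ := ih hs
      rcases htri b m with h | h | h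
      · refine ⟨b, Finset.mem_insert_self _ _, fun a ha => ?_⟩
        rcases Finset.mem_insert.mp ha with rfl | ha'
        · exact Or.inr rfl
        · rcases hmin a ha' with h' | h'
          · exact Or.inl (htrans _ _ _ h h')
          · exact Or.inl (h' ▸ h)
      · exact absurd (h ▸ hm) hb
      · refine ⟨m, Finset.mem_insert_of_mem hm, fun a ha => ?_⟩
        rcases Finset.mem_insert.mp ha with rfl | ha'
        · exact Or.inl h
        · exact hmin a ha'
    · have hs' : s = ∅ := Finset.not_nonempty_iff_eq_empty.mp hs
      subst hs'
      exact ⟨b, by simp, by simp⟩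

lemma ctx_flipnot (C : Ctx lt red R) : Ctx (fun a b => lt b a) (fun z => !red z) R := by
  refine ⟨fun a b c h h' => C.htrans c b a h' h, C.hirr, ?_, C.hsymm, ?_, ?_, ?_, C.hnomin,
    C.hnomax, ?_, ?_⟩
  · intro a b
    rcases C.htri a b with h | h | h
    · exact Or.inr (Or.inr h)
    · exact Or.inr (Or.inl h)
    · exact Or.inl h
  · exact fun a b h hne => C.hbip a b h (bool_not_inj hne)
  · exact homog_flip (homog_not C.hhom)
  · intro x y h
    refine ⟨?_, ?_⟩
    · obtain ⟨z, h1, h2, h3⟩ := (C.hdense y x h).2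
      exact ⟨z, h2, h1, by simp [h3]⟩
    · obtain ⟨z, h1, h2, h3⟩ := (C.hdense y x h).1
      exact ⟨z, h2, h1, by simp [h3]⟩
  · obtain ⟨a, b, ha, hb, hab, hr⟩ := C.hE
    exact ⟨b, a, by simp [hb], by simp [ha], hab, C.hsymm a b hr⟩
  · obtain ⟨a, b, ha, hb, hab, hr⟩ := C.hNE
    exact ⟨b, a, by simp [hb], by simp [ha], hab, fun h => hr (C.hsymm b a h)⟩

/-- Swap a red point `p` lying above a red set `A` to another red point `q` above `A`,
fixing `A` pointwise, by homogeneity. -/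
lemma swap_top_aux (lt : X → X → Prop) (red : X → Bool) (R : X → X → Prop)
    (hirr : ∀ a, ¬ lt a a) (htrans : ∀ a b c, lt a b → lt b c → lt a c)
    (hbip : ∀ a b, R a b → red a ≠ red b) (hhom : Homogeneous lt red R)
    (A : Finset X) (hA : ∀ a ∈ A, red a = true) {p q : X}
    (hp : red p = true) (hq : red q = true)
    (hpA : ∀ a ∈ A, lt a p) (hqA : ∀ a ∈ A, lt a q) :
    ∃ g : X ≃ X, (∀ x y, lt x y ↔ lt (g x) (g y)) ∧ (∀ x, red (g x) = red x) ∧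
      (∀ x y, R x y ↔ R (g x) (g y)) ∧ (∀ a ∈ A, g a = a) ∧ g p = q := by
  classical
  have hasym : ∀ a b, lt a b → ¬ lt b a := fun a b h h' => hirr a (htrans _ _ _ h h')
  have hnotmem : p ∉ A := fun hmem => hirr p (hpA p hmem)
  set f : X → X := fun z => if z = p then q else z with hf
  have hfp : f p = q := by simp [hf]
  have hfa : ∀ a ∈ A, f a = a := by
    intro a ha
    have hne : a ≠ p := fun h => hnotmem (h ▸ ha)
    simp [hf, hne]
  have hred : ∀ z ∈ insert p A, red z = true := by
    intro z hz
    rcases Finset.mem_insert.mp hz with rfl | hz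
    · exact hp
    · exact hA z hz
  have hredf : ∀ z ∈ insert p A, red (f z) = true := by
    intro z hz
    rcases Finset.mem_insert.mp hz with rfl | hz
    · rw [hfp]; exact hq
    · rw [hfa z hz]; exact hA z hz
  have hiso : IsPartialIso lt red R (insert p A) f := by
    refine ⟨?_, ?_, ?_⟩
    · intro x hx y hy
      rcases Finset.mem_insert.mp hx with rfl | hxA <;> rcases Finset.mem_insert.mp hy with rfl | hyA
      · rw [hfp]; exact iff_of_false (hirr _) (hirr _)
      · rw [hfp, hfa y hyA]
        exact iff_of_false (hasym _ _ (hpA y hyA)) (hasym _ _ (hqA y hyA))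
      · rw [hfp, hfa x hxA]
        exact iff_of_true (hpA x hxA) (hqA x hxA)
      · rw [hfa x hxA, hfa y hyA]
    · intro x hx; rw [hredf x hx, hred x hx]
    · intro x hx y hy
      exact iff_of_false (fun h => hbip x y h ((hred x hx).trans (hred y hy).symm))
        (fun h => hbip _ _ h ((hredf x hx).trans (hredf y hy).symm))
  obtain ⟨g, ⟨g1, g2, g3⟩, hgs⟩ := hhom _ f hiso
  exact ⟨g, g1, g2, g3,
    fun a ha => (hgs a (Finset.mem_insert_of_mem ha)).trans (hfa a ha),
    (hgs p (Finset.mem_insert_self _ _)).trans hfp⟩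

/-- Swap two blue points `n₁ < n₂` above a red set `A` to blue points `c₁ < c₂` above `A`
with the same adjacencies over `A`, fixing `A` pointwise. -/
lemma swap_two_blues_aux (lt : X → X → Prop) (red : X → Bool) (R : X → X → Prop)
    (hirr : ∀ a, ¬ lt a a) (htrans : ∀ a b c, lt a b → lt b c → lt a c)
    (hsymm : ∀ a b, R a b → R b a) (hbip : ∀ a b, R a b → red a ≠ red b)
    (hhom : Homogeneous lt red R)
    (A : Finset X) (hA : ∀ a ∈ A, red a = true) {n₁ n₂ c₁ c₂ : X}
    (hn₁ : red n₁ = false) (hn₂ : red n₂ = false) (hc₁ : red c₁ = false) (hc₂ : red c₂ = false)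
    (hAn₁ : ∀ a ∈ A, lt a n₁) (hAn₂ : ∀ a ∈ A, lt a n₂)
    (hAc₁ : ∀ a ∈ A, lt a c₁) (hAc₂ : ∀ a ∈ A, lt a c₂)
    (h12 : lt n₁ n₂) (hc12 : lt c₁ c₂)
    (ht1 : ∀ a ∈ A, (R a n₁ ↔ R a c₁)) (ht2 : ∀ a ∈ A, (R a n₂ ↔ R a c₂)) :
    ∃ g : X ≃ X, (∀ x y, lt x y ↔ lt (g x) (g y)) ∧ (∀ x, red (g x) = red x) ∧
      (∀ x y, R x y ↔ R (g x) (g y)) ∧ (∀ a ∈ A, g a = a) ∧ g n₁ = c₁ ∧ g n₂ = c₂ := by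
  classical
  have hasym : ∀ a b, lt a b → ¬ lt b a := fun a b h h' => hirr a (htrans _ _ _ h h')
  have nb : ∀ u v, red u = false → red v = false → ¬ R u v :=
    fun u v hu hv h => hbip u v h (hu.trans hv.symm)
  have hne21 : n₂ ≠ n₁ := fun h => hirr n₁ (by rw [h] at h12; exact h12)
  have hAne1 : ∀ a ∈ A, a ≠ n₁ := fun a ha h => hirr _ (h ▸ hAn₁ a ha)
  have hAne2 : ∀ a ∈ A, a ≠ n₂ := fun a ha h => hirr _ (h ▸ hAn₂ a ha)
  set f : X → X := fun z => if z = n₁ then c₁ else if z = n₂ then c₂ else z with hf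
  have hf1 : f n₁ = c₁ := by simp [hf]
  have hf2 : f n₂ = c₂ := by simp [hf, hne21]
  have hfa : ∀ a ∈ A, f a = a := fun a ha => by simp [hf, hAne1 a ha, hAne2 a ha]
  set s : Finset X := insert n₁ (insert n₂ A) with hs
  have hmem : ∀ z ∈ s, z = n₁ ∨ z = n₂ ∨ z ∈ A := by
    intro z hz
    simpa [hs, Finset.mem_insert] using hz
  have hiso : IsPartialIso lt red R s f := by
    refine ⟨?_, ?_, ?_⟩
    · intro x hx y hy
      rcases hmem x hx with rfl | rfl | hxA <;> rcases hmem y hy with rfl | rfl | hyA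
      · rw [hf1]; exact iff_of_false (hirr _) (hirr _)
      · rw [hf1, hf2]; exact iff_of_true h12 hc12
      · rw [hf1, hfa y hyA]
        exact iff_of_false (hasym _ _ (hAn₁ y hyA)) (hasym _ _ (hAc₁ y hyA))
      · rw [hf2, hf1]; exact iff_of_false (hasym _ _ h12) (hasym _ _ hc12)
      · rw [hf2]; exact iff_of_false (hirr _) (hirr _)
      · rw [hf2, hfa y hyA]
        exact iff_of_false (hasym _ _ (hAn₂ y hyA)) (hasym _ _ (hAc₂ y hyA))
      · rw [hfa x hxA, hf1]; exact iff_of_true (hAn₁ x hxA) (hAc₁ x hxA)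
      · rw [hfa x hxA, hf2]; exact iff_of_true (hAn₂ x hxA) (hAc₂ x hxA)
      · rw [hfa x hxA, hfa y hyA]
    · intro x hx
      rcases hmem x hx with rfl | rfl | hxA
      · rw [hf1, hc₁, hn₁]
      · rw [hf2, hc₂, hn₂]
      · rw [hfa x hxA]
    · intro x hx y hy
      rcases hmem x hx with rfl | rfl | hxA <;> rcases hmem y hy with rfl | rfl | hyA
      · rw [hf1]; exact iff_of_false (nb _ _ hn₁ hn₁) (nb _ _ hc₁ hc₁)
      · rw [hf1, hf2]; exact iff_of_false (nb _ _ hn₁ hn₂) (nb _ _ hc₁ hc₂)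
      · rw [hf1, hfa y hyA]
        exact ⟨fun h => hsymm _ _ ((ht1 _ hyA).mp (hsymm _ _ h)),
          fun h => hsymm _ _ ((ht1 _ hyA).mpr (hsymm _ _ h))⟩
      · rw [hf2, hf1]; exact iff_of_false (nb _ _ hn₂ hn₁) (nb _ _ hc₂ hc₁)
      · rw [hf2]; exact iff_of_false (nb _ _ hn₂ hn₂) (nb _ _ hc₂ hc₂)
      · rw [hf2, hfa y hyA]
        exact ⟨fun h => hsymm _ _ ((ht2 _ hyA).mp (hsymm _ _ h)),
          fun h => hsymm _ _ ((ht2 _ hyA).mpr (hsymm _ _ h))⟩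
      · rw [hfa x hxA, hf1]; exact ht1 x hxA
      · rw [hfa x hxA, hf2]; exact ht2 x hxA
      · rw [hfa x hxA, hfa y hyA]
  obtain ⟨g, ⟨g1, g2, g3⟩, hgs⟩ := hhom _ f hiso
  refine ⟨g, g1, g2, g3, ?_, ?_, ?_⟩
  · intro a ha
    exact (hgs a (by simp [hs, Finset.mem_insert, ha])).trans (hfa a ha)
  · exact (hgs n₁ (by simp [hs])).trans hf1
  · exact (hgs n₂ (by simp [hs])).trans hf2

end Core

section Main

variable {X : Type*} [DecidableEq X]
variable {lt : X → X → Prop} {red : X → Bool} {R : X → X → Prop}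

/-- Over any red point `a`, blues of both adjacency types exist above `a`. -/
lemma ctx_t1 (C : Ctx lt red R) (a : X) (ha : red a = true) (v : Prop) :
    ∃ c, red c = false ∧ lt a c ∧ (R a c ↔ v) := by
  classical
  by_cases hv : v
  · obtain ⟨a₀, b₀, ha₀, hb₀, hab, hr⟩ := C.hE
    obtain ⟨g, gord, gcol, grel, -, hgp⟩ := swap_top_aux lt red R C.hirr C.htrans C.hbip C.hhom
      ∅ (by simp) ha₀ ha (by simp) (by simp)
    refine ⟨g b₀, by rw [gcol]; exact hb₀, ?_, ?_⟩
    · have h := (gord a₀ b₀).mp hab; rwa [hgp] at h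
    · have h := (grel a₀ b₀).mp hr; rw [hgp] at h; exact iff_of_true h hv
  · obtain ⟨a₀, b₀, ha₀, hb₀, hab, hr⟩ := C.hNE
    obtain ⟨g, gord, gcol, grel, -, hgp⟩ := swap_top_aux lt red R C.hirr C.htrans C.hbip C.hhom
      ∅ (by simp) ha₀ ha (by simp) (by simp)
    refine ⟨g b₀, by rw [gcol]; exact hb₀, ?_, ?_⟩
    · have h := (gord a₀ b₀).mp hab; rwa [hgp] at h
    · have h : ¬ R (g a₀) (g b₀) := fun hh => hr ((grel a₀ b₀).mpr hh)
      rw [hgp] at h; exact iff_of_false h hv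

/-- Blues of any adjacency type over `a` are cofinal. -/
lemma ctx_t2 (C : Ctx lt red R) (a : X) (ha : red a = true) (v : Prop) (z : X) (haz : lt a z) :
    ∃ c, red c = false ∧ lt a c ∧ lt z c ∧ (R a c ↔ v) := by
  obtain ⟨c₀, hc₀, hac₀, hty⟩ := ctx_t1 C a ha v
  obtain ⟨p, hap, hpc₀, hpred⟩ := (C.hdense a c₀ hac₀).1
  obtain ⟨w, hw⟩ := C.hnomax z
  obtain ⟨q, hzq, -, hqred⟩ := (C.hdense z w hw).1
  obtain ⟨g, gord, gcol, grel, hfix, hgp⟩ := swap_top_aux lt red R C.hirr C.htrans C.hbip C.hhom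
    {a} (by simpa using ha) hpred hqred (by simpa using hap)
    (by simpa using C.htrans a z q haz hzq)
  have hga : g a = a := hfix a (by simp)
  refine ⟨g c₀, by rw [gcol]; exact hc₀, ?_, ?_, ?_⟩
  · have h := (gord a c₀).mp hac₀; rwa [hga] at h
  · have h := (gord p c₀).mp hpc₀; rw [hgp] at h; exact C.htrans _ _ _ hzq h
  · have h := grel a c₀; rw [hga] at h; exact h.symm.trans hty

/-- Blues of any adjacency type over `a` are coinitial in `(a,∞)`. -/
lemma ctx_t3 (C : Ctx lt red R) (a : X) (ha : red a = true) (v : Prop) (z : X) (haz : lt a z) :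
    ∃ c, red c = false ∧ lt a c ∧ lt c z ∧ (R a c ↔ v) := by
  obtain ⟨c₀, hc₀, hac₀, hty⟩ := ctx_t1 C a ha v
  obtain ⟨w, hw⟩ := C.hnomax c₀
  obtain ⟨p, hc₀p, -, hpred⟩ := (C.hdense c₀ w hw).1
  obtain ⟨q, haq, hqz, hqred⟩ := (C.hdense a z haz).1
  obtain ⟨g, gord, gcol, grel, hfix, hgp⟩ := swap_top_aux lt red R C.hirr C.htrans C.hbip C.hhom
    {a} (by simpa using ha) hpred hqred
    (by simpa using C.htrans a c₀ p hac₀ hc₀p) (by simpa using haq)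
  have hga : g a = a := hfix a (by simp)
  refine ⟨g c₀, by rw [gcol]; exact hc₀, ?_, ?_, ?_⟩
  · have h := (gord a c₀).mp hac₀; rwa [hga] at h
  · have h := (gord c₀ p).mp hc₀p; rw [hgp] at h; exact C.htrans _ _ _ h hqz
  · have h := grel a c₀; rw [hga] at h; exact h.symm.trans hty

/-- One-red-point density: blues of any adjacency type over `a` are dense above `a`. -/
lemma ctx_dens1 (C : Ctx lt red R) (a : X) (ha : red a = true) (x y : X)
    (hax : lt a x ∨ a = x) (hxy : lt x y) (v : Prop) :
    ∃ c, red c = false ∧ lt x c ∧ lt c y ∧ (R a c ↔ v) := by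
  obtain ⟨c₁, hxc₁, hc₁y, hc₁b⟩ := (C.hdense x y hxy).2
  obtain ⟨c₂, hc₁c₂, hc₂y, hc₂b⟩ := (C.hdense c₁ y hc₁y).2
  obtain ⟨u₀, hu₀b, hau₀, hu₀v⟩ := ctx_t1 C a ha v
  obtain ⟨n₁, hn₁b, han₁, hn₁u₀, hn₁ty⟩ := ctx_t3 C a ha (R a c₁) u₀ hau₀
  obtain ⟨n₂, hn₂b, han₂, hu₀n₂, hn₂ty⟩ := ctx_t2 C a ha (R a c₂) u₀ hau₀
  have hac₁ : lt a c₁ := by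
    rcases hax with h | h
    · exact C.htrans _ _ _ h hxc₁
    · exact h ▸ hxc₁
  have hac₂ : lt a c₂ := C.htrans _ _ _ hac₁ hc₁c₂
  obtain ⟨g, gord, gcol, grel, hfix, hg1, hg2⟩ := swap_two_blues_aux lt red R C.hirr C.htrans
    C.hsymm C.hbip C.hhom {a} (by simpa using ha) hn₁b hn₂b hc₁b hc₂b (by simpa using han₁)
    (by simpa using han₂) (by simpa using hac₁) (by simpa using hac₂)
    (C.htrans _ _ _ hn₁u₀ hu₀n₂) hc₁c₂ (by simpa using hn₁ty) (by simpa using hn₂ty)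
  have hga : g a = a := hfix a (by simp)
  refine ⟨g u₀, by rw [gcol]; exact hu₀b, ?_, ?_, ?_⟩
  · have h := (gord n₁ u₀).mp hn₁u₀; rw [hg1] at h; exact C.htrans _ _ _ hxc₁ h
  · have h := (gord u₀ n₂).mp hu₀n₂; rw [hg2] at h; exact C.htrans _ _ _ h hc₂y
  · have h := grel a u₀; rw [hga] at h; exact h.symm.trans hu₀v

/-- Every adjacency type over a finite red set is realized by a blue point above it. -/
lemma ctx_exists_blue_type (C : Ctx lt red R) (A : Finset X)
    (hA : ∀ a ∈ A, red a = true) (Q : X → Prop) :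
    ∃ u, red u = false ∧ (∀ a ∈ A, lt a u) ∧ ∀ a ∈ A, (R a u ↔ Q a) := by
  classical
  suffices H : ∀ n (A : Finset X), A.card ≤ n → (∀ a ∈ A, red a = true) →
      ∃ u, red u = false ∧ (∀ a ∈ A, lt a u) ∧ ∀ a ∈ A, (R a u ↔ Q a) from
    H A.card A le_rfl hA
  intro n
  induction n with
  | zero =>
    intro A hcard _
    have hA0 : A = ∅ := Finset.card_eq_zero.mp (Nat.le_zero.mp hcard)
    subst hA0
    obtain ⟨a₀, b₀, -, hb₀, -, -⟩ := C.hE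
    exact ⟨b₀, hb₀, by simp, by simp⟩
  | succ n ih =>
    intro A hcard hA
    by_cases hAe : A.Nonempty
    swap
    · have hA0 : A = ∅ := Finset.not_nonempty_iff_eq_empty.mp hAe
      subst hA0
      obtain ⟨a₀, b₀, -, hb₀, -, -⟩ := C.hE
      exact ⟨b₀, hb₀, by simp, by simp⟩
    obtain ⟨m, hmA, hmin⟩ := finset_min lt C.htrans C.htri A hAe
    set A' : Finset X := A.erase m with hA'def
    have hcard' : A'.card ≤ n := by
      have h1 : A'.card = A.card - 1 := by rw [hA'def]; exact Finset.card_erase_of_mem hmA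
      omega
    have hA'red : ∀ a ∈ A', red a = true := fun a ha => hA a (Finset.mem_of_mem_erase ha)
    obtain ⟨u', hu'b, hu'ab, hu'ty⟩ := ih A' hcard' hA'red
    obtain ⟨m₀, hm₀mem, hm₀min⟩ := finset_min lt C.htrans C.htri (insert u' A')
      ⟨u', Finset.mem_insert_self _ _⟩
    obtain ⟨y₀, hy₀⟩ := C.hnomin m₀
    have hcond : lt m₀ u' ∨ u' = m₀ :=
      (hm₀min u' (Finset.mem_insert_self _ _)).imp id Eq.symm
    obtain ⟨r, hr1, hr2, hr3, hr4⟩ := ctx_dens1 (ctx_flipnot C) u' (by simp [hu'b]) m₀ y₀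
      hcond hy₀ (Q m)
    have hrred : red r = true := by simpa using hr1
    have hrA' : ∀ a ∈ A', lt r a := by
      intro a ha
      rcases hm₀min a (Finset.mem_insert_of_mem ha) with h | h
      · exact C.htrans _ _ _ hr2 h
      · rw [← h]; exact hr2
    have hru' : lt r u' := by
      rcases hcond with h | h
      · exact C.htrans _ _ _ hr2 h
      · rw [h]; exact hr2
    have hmA' : ∀ a ∈ A', lt m a := by
      intro a ha
      rcases hmin a (Finset.mem_of_mem_erase ha) with h | h
      · exact h
      · exact absurd h.symm (Finset.ne_of_mem_erase ha)
    obtain ⟨g, gord, gcol, grel, hfix, hgr⟩ := swap_top_aux (fun a b => lt b a) red R C.hirr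
      (fun a b c h h' => C.htrans c b a h' h) C.hbip (homog_flip C.hhom) A' hA'red hrred
      (hA m hmA) hrA' hmA'
    refine ⟨g u', by rw [gcol]; exact hu'b, ?_, ?_⟩
    · intro a ha
      by_cases ham : a = m
      · subst ham
        have h := (gord u' r).mp hru'
        rwa [hgr] at h
      · have haA' : a ∈ A' := Finset.mem_erase.mpr ⟨ham, ha⟩
        have h := (gord u' a).mp (hu'ab a haA')
        rwa [hfix a haA'] at h
    · intro a ha
      by_cases ham : a = m
      · subst ham
        have h := grel r u'
        rw [hgr] at h
        exact h.symm.trans (Iff.trans ⟨fun hh => C.hsymm _ _ hh, fun hh => C.hsymm _ _ hh⟩ hr4)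
      · have haA' : a ∈ A' := Finset.mem_erase.mpr ⟨ham, ha⟩
        have h := grel a u'
        rw [hfix a haA'] at h
        exact h.symm.trans (hu'ty a haA')

/-- Blues realizing any type over `A` are cofinal. -/
lemma ctx_cofinal (C : Ctx lt red R) (A : Finset X) (hA : ∀ a ∈ A, red a = true)
    (hAe : A.Nonempty) (Q : X → Prop) (z : X) (hz : ∀ a ∈ A, lt a z) :
    ∃ u, red u = false ∧ (∀ a ∈ A, lt a u) ∧ (∀ a ∈ A, (R a u ↔ Q a)) ∧ lt z u := by
  obtain ⟨u', hu'b, hu'ab, hu'ty⟩ := ctx_exists_blue_type C A hA Q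
  obtain ⟨m, hm, hmax⟩ := finset_min (fun a b => lt b a) (fun a b c h h' => C.htrans c b a h' h)
    (fun a b => by rcases C.htri a b with h | h | h
                   exacts [Or.inr (Or.inr h), Or.inr (Or.inl h), Or.inl h]) A hAe
  obtain ⟨p, hmp, hpu', hpred⟩ := (C.hdense m u' (hu'ab m hm)).1
  have hpA : ∀ a ∈ A, lt a p := by
    intro a ha
    rcases hmax a ha with h | h
    · exact C.htrans _ _ _ h hmp
    · rw [← h]; exact hmp
  obtain ⟨w, hw⟩ := C.hnomax z
  obtain ⟨q, hzq, -, hqred⟩ := (C.hdense z w hw).1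
  have hqA : ∀ a ∈ A, lt a q := fun a ha => C.htrans _ _ _ (hz a ha) hzq
  obtain ⟨g, gord, gcol, grel, hfix, hgp⟩ := swap_top_aux lt red R C.hirr C.htrans C.hbip C.hhom
    A hA hpred hqred hpA hqA
  refine ⟨g u', by rw [gcol]; exact hu'b, ?_, ?_, ?_⟩
  · intro a ha
    have h := (gord a u').mp (hu'ab a ha)
    rwa [hfix a ha] at h
  · intro a ha
    have h := grel a u'
    rw [hfix a ha] at h
    exact h.symm.trans (hu'ty a ha)
  · have h := (gord p u').mp hpu'
    rw [hgp] at h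
    exact C.htrans _ _ _ hzq h

/-- Blues realizing any type over `A` are coinitial above `A`. -/
lemma ctx_coinitial (C : Ctx lt red R) (A : Finset X) (hA : ∀ a ∈ A, red a = true)
    (hAe : A.Nonempty) (Q : X → Prop) (z : X) (hz : ∀ a ∈ A, lt a z) :
    ∃ u, red u = false ∧ (∀ a ∈ A, lt a u) ∧ (∀ a ∈ A, (R a u ↔ Q a)) ∧ lt u z := by
  obtain ⟨u', hu'b, hu'ab, hu'ty⟩ := ctx_exists_blue_type C A hA Q
  obtain ⟨w, hw⟩ := C.hnomax u'
  obtain ⟨p, hu'p, -, hpred⟩ := (C.hdense u' w hw).1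
  have hpA : ∀ a ∈ A, lt a p := fun a ha => C.htrans _ _ _ (hu'ab a ha) hu'p
  obtain ⟨m, hm, hmax⟩ := finset_min (fun a b => lt b a) (fun a b c h h' => C.htrans c b a h' h)
    (fun a b => by rcases C.htri a b with h | h | h
                   exacts [Or.inr (Or.inr h), Or.inr (Or.inl h), Or.inl h]) A hAe
  obtain ⟨q, hmq, hqz, hqred⟩ := (C.hdense m z (hz m hm)).1
  have hqA : ∀ a ∈ A, lt a q := by
    intro a ha
    rcases hmax a ha with h | h
    · exact C.htrans _ _ _ h hmq
    · rw [← h]; exact hmq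
  obtain ⟨g, gord, gcol, grel, hfix, hgp⟩ := swap_top_aux lt red R C.hirr C.htrans C.hbip C.hhom
    A hA hpred hqred hpA hqA
  refine ⟨g u', by rw [gcol]; exact hu'b, ?_, ?_, ?_⟩
  · intro a ha
    have h := (gord a u').mp (hu'ab a ha)
    rwa [hfix a ha] at h
  · intro a ha
    have h := grel a u'
    rw [hfix a ha] at h
    exact h.symm.trans (hu'ty a ha)
  · have h := (gord u' p).mp hu'p
    rw [hgp] at h
    exact C.htrans _ _ _ h hqz

/-- Main abstract density lemma. -/
lemma ctx_master (C : Ctx lt red R) (A₁ A₂ : Finset X)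
    (hA₁ : ∀ a ∈ A₁, red a = true) (hA₂ : ∀ a ∈ A₂, red a = true)
    (hdisj : Disjoint A₁ A₂) (hne : (A₁ ∪ A₂).Nonempty) (x y : X)
    (hx : ∀ a ∈ A₁ ∪ A₂, lt a x ∨ a = x) (hxy : lt x y) :
    ∃ c, red c = false ∧ lt x c ∧ lt c y ∧ (∀ a ∈ A₁, R a c) ∧ (∀ a ∈ A₂, ¬ R a c) := by
  classical
  set A : Finset X := A₁ ∪ A₂ with hAdef
  have hA : ∀ a ∈ A, red a = true := by
    intro a ha
    rcases Finset.mem_union.mp ha with h | h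
    · exact hA₁ a h
    · exact hA₂ a h
  obtain ⟨c₁, hxc₁, hc₁y, hc₁b⟩ := (C.hdense x y hxy).2
  obtain ⟨c₂, hc₁c₂, hc₂y, hc₂b⟩ := (C.hdense c₁ y hc₁y).2
  obtain ⟨u₀, hu₀b, hu₀A, hu₀ty⟩ := ctx_exists_blue_type C A hA (fun a => a ∈ A₁)
  obtain ⟨n₁, hn₁b, hn₁A, hn₁ty, hn₁u₀⟩ := ctx_coinitial C A hA hne (fun a => R a c₁) u₀ hu₀A
  obtain ⟨n₂, hn₂b, hn₂A, hn₂ty, hu₀n₂⟩ := ctx_cofinal C A hA hne (fun a => R a c₂) u₀ hu₀A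
  have hAc₁ : ∀ a ∈ A, lt a c₁ := by
    intro a ha
    rcases hx a ha with h | h
    · exact C.htrans _ _ _ h hxc₁
    · exact h ▸ hxc₁
  have hAc₂ : ∀ a ∈ A, lt a c₂ := fun a ha => C.htrans _ _ _ (hAc₁ a ha) hc₁c₂
  obtain ⟨g, gord, gcol, grel, hfix, hg1, hg2⟩ := swap_two_blues_aux lt red R C.hirr C.htrans
    C.hsymm C.hbip C.hhom A hA hn₁b hn₂b hc₁b hc₂b hn₁A hn₂A hAc₁ hAc₂
    (C.htrans _ _ _ hn₁u₀ hu₀n₂) hc₁c₂ hn₁ty hn₂ty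
  refine ⟨g u₀, by rw [gcol]; exact hu₀b, ?_, ?_, ?_, ?_⟩
  · have h := (gord n₁ u₀).mp hn₁u₀; rw [hg1] at h; exact C.htrans _ _ _ hxc₁ h
  · have h := (gord u₀ n₂).mp hu₀n₂; rw [hg2] at h; exact C.htrans _ _ _ h hc₂y
  · intro a ha
    have hmem : a ∈ A := Finset.mem_union_left _ ha
    have h := (grel a u₀).mp ((hu₀ty a hmem).mpr ha)
    rwa [hfix a hmem] at h
  · intro a ha h
    have hmem : a ∈ A := Finset.mem_union_right _ ha
    have h' := (grel a u₀).mpr (by rw [hfix a hmem]; exact h)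
    exact (Finset.disjoint_right.mp hdisj ha) ((hu₀ty a hmem).mp h')

end Main

/-- Case (vi) of the main theorem: for a countable homogeneous ordered bipartite graph
whose underlying coloured order is ℚ₂, the part `R₁` of `R` consisting of edges going up
from red to blue is empty, right complete, or right generic; symmetrically the part `R₂`
of edges going down from red to blue is empty, left complete, or left generic; and `R`
is the union of `R₁` and `R₂`. -/
theorem stmt19 {X : Type*} [LinearOrder X] [Countable X] [DecidableEq X]
    [Nonempty X] [NoMinOrder X] [NoMaxOrder X]
    (red : X → Bool) (R : X → X → Prop)
    (hSymm : ∀ x y, R x y → R y x) (hIrr : ∀ x, ¬ R x x)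
    (hBip : ∀ x y, R x y → red x ≠ red y)
    (hHom : Homogeneous (· < · : X → X → Prop) red R)
    (hdense : ∀ x y : X, x < y →
      (∃ z, x < z ∧ z < y ∧ red z = true) ∧ (∃ z, x < z ∧ z < y ∧ red z = false)) :
    ((∀ a b : X, red a = true → red b = false → a < b → ¬ R a b) ∨
     (∀ a b : X, red a = true → red b = false → a < b → R a b) ∨
     RightGeneric red R) ∧
    ((∀ a b : X, red a = true → red b = false → b < a → ¬ R a b) ∨
     (∀ a b : X, red a = true → red b = false → b < a → R a b) ∨
     LeftGeneric red R) ∧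
    (∀ a b : X, red a = true → red b = false →
      (R a b ↔ ((a < b ∧ R a b) ∨ (b < a ∧ R a b)))) := by
  classical
  refine ⟨?_, ?_, ?_⟩
  · -- R₁ : empty, complete, or right generic
    by_cases hcE : ∃ a b, red a = true ∧ red b = false ∧ a < b ∧ R a b
    swap
    · exact Or.inl fun a b ha hb hab h => hcE ⟨a, b, ha, hb, hab, h⟩
    by_cases hcN : ∃ a b, red a = true ∧ red b = false ∧ a < b ∧ ¬ R a b
    swap
    · refine Or.inr (Or.inl fun a b ha hb hab => ?_)
      by_contra h
      exact hcN ⟨a, b, ha, hb, hab, h⟩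
    refine Or.inr (Or.inr ?_)
    have RC : Ctx (· < · : X → X → Prop) red R :=
      ⟨fun _ _ _ h h' => lt_trans h h', fun a => lt_irrefl a, fun a b => lt_trichotomy a b,
        hSymm, hBip, hHom, hdense, fun x => exists_gt x, fun x => exists_lt x, hcE, hcN⟩
    constructor
    · intro A₁ A₂ h1 h2 hd hne x y hmax hxy
      exact ctx_master RC A₁ A₂ h1 h2 hd hne x y
        (fun a ha => lt_or_eq_of_le (le_trans (Finset.le_max' _ a ha) hmax)) hxy
    · intro B₁ B₂ h1 h2 hd hne x y hxy hmin
      obtain ⟨c, hc1, hc2, hc3, hc4, hc5⟩ := ctx_master (ctx_flipnot RC) B₁ B₂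
        (fun b hb => by simp [h1 b hb]) (fun b hb => by simp [h2 b hb]) hd hne y x
        (fun b hb => by
          rcases lt_or_eq_of_le (le_trans hmin (Finset.min'_le _ b hb)) with h | h
          · exact Or.inl h
          · exact Or.inr h.symm) hxy
      exact ⟨c, by simpa using hc1, hc3, hc2, fun b hb => hSymm _ _ (hc4 b hb),
        fun b hb h => hc5 b hb (hSymm _ _ h)⟩
  · -- R₂ : empty, complete, or left generic
    by_cases hcE : ∃ a b, red a = true ∧ red b = false ∧ b < a ∧ R a b
    swap
    · exact Or.inl fun a b ha hb hba h => hcE ⟨a, b, ha, hb, hba, h⟩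
    by_cases hcN : ∃ a b, red a = true ∧ red b = false ∧ b < a ∧ ¬ R a b
    swap
    · refine Or.inr (Or.inl fun a b ha hb hba => ?_)
      by_contra h
      exact hcN ⟨a, b, ha, hb, hba, h⟩
    refine Or.inr (Or.inr ?_)
    have LC : Ctx (fun a b : X => b < a) red R := by
      refine ⟨fun _ _ _ h h' => lt_trans h' h, fun a => lt_irrefl a, ?_, hSymm, hBip,
        homog_flip hHom, ?_, fun x => exists_lt x, fun x => exists_gt x, hcE, hcN⟩
      · intro a b
        rcases lt_trichotomy a b with h | h | h
        exacts [Or.inr (Or.inr h), Or.inr (Or.inl h), Or.inl h]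
      · intro x y h
        refine ⟨?_, ?_⟩
        · obtain ⟨z, h1, h2, h3⟩ := (hdense y x h).1
          exact ⟨z, h2, h1, h3⟩
        · obtain ⟨z, h1, h2, h3⟩ := (hdense y x h).2
          exact ⟨z, h2, h1, h3⟩
    constructor
    · intro A₁ A₂ h1 h2 hd hne x y hxy hmin
      obtain ⟨c, hc1, hc2, hc3, hc4, hc5⟩ := ctx_master LC A₁ A₂ h1 h2 hd hne y x
        (fun a ha => by
          rcases lt_or_eq_of_le (le_trans hmin (Finset.min'_le _ a ha)) with h | h
          · exact Or.inl h
          · exact Or.inr h.symm) hxy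
      exact ⟨c, hc1, hc3, hc2, hc4, hc5⟩
    · intro B₁ B₂ h1 h2 hd hne x y hmax hxy
      obtain ⟨c, hc1, hc2, hc3, hc4, hc5⟩ := ctx_master (ctx_flipnot LC) B₁ B₂
        (fun b hb => by simp [h1 b hb]) (fun b hb => by simp [h2 b hb]) hd hne x y
        (fun b hb => by
          rcases lt_or_eq_of_le (le_trans (Finset.le_max' _ b hb) hmax) with h | h
          · exact Or.inl h
          · exact Or.inr h) hxy
      exact ⟨c, by simpa using hc1, hc2, hc3, fun b hb => hSymm _ _ (hc4 b hb),
        fun b hb h => hc5 b hb (hSymm _ _ h)⟩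
  · -- R = R₁ ∪ R₂
    intro a b ha hb
    constructor
    · intro h
      have hne : a ≠ b := fun e => hBip a b h (by rw [e])
      rcases lt_or_gt_of_ne hne with h' | h'
      · exact Or.inl ⟨h', h⟩
      · exact Or.inr ⟨h', h⟩
    · rintro (⟨-, h⟩ | ⟨-, h⟩) <;> exact h
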